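/- Every 2×2×2 array with entries in {0,1} has Boolean rank at most 4, and the array with entries x_{112}=1, x_{121}=1, x_{211}=1, x_{222}=1 and all other entries 0 has Boolean rank exactly 4. -/
import Mathlib


/-- The Boolean outer product of `n` vectors in `{0,1}^2` (entrywise AND). -/
noncomputable def bOuter (n : ℕ) (v : Fin n → Fin 2 → Bool) : (Fin n → Fin 2) → Bool :=
  fun i => Finset.univ.inf fun j => v j (i j)

/-- `X` is the entrywise OR of `R` Boolean outer products. -/
def bHasRankLE (n R : ℕ) (X : (Fin n → Fin 2) → Bool) : Prop :=
  ∃ v : Fin R → Fin n → Fin 2 → Bool,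
    X = fun i => Finset.univ.sup fun r => bOuter n (v r) i

/-- The Boolean rank of a `2×⋯×2` array of zeros and ones. -/
noncomputable def boolRank (n : ℕ) (X : (Fin n → Fin 2) → Bool) : ℕ :=
  sInf {R | bHasRankLE n R X}

/-- Build a `2×2×2` Boolean array from its flattening. -/
def bflat3 (l : Fin 8 → Bool) : (Fin 3 → Fin 2) → Bool :=
  fun i => l ⟨4 * (i 0 : ℕ) + 2 * (i 1 : ℕ) + (i 2 : ℕ), by
    have h0 := (i 0).isLt; have h1 := (i 1).isLt; have h2 := (i 2).isLt; omega⟩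

-- auxiliary lemmas

lemma sup_true_iff {R : ℕ} (f : Fin R → Bool) :
    Finset.univ.sup f = true ↔ ∃ r, f r = true := by
  constructor
  · intro h
    by_contra hc
    push_neg at hc
    have hb : Finset.univ.sup f = (⊥ : Bool) := by
      apply (Finset.sup_eq_bot_iff f _).2
      intro s _
      show f s = false
      exact Bool.eq_false_iff.mpr (hc s)
    rw [h] at hb
    exact absurd hb (by decide)
  · rintro ⟨r, hr⟩
    have hle : f r ≤ Finset.univ.sup f := Finset.le_sup (Finset.mem_univ r)
    rw [hr] at hle
    exact le_antisymm (by exact le_top) hle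

lemma inf_true_iff {n : ℕ} (f : Fin n → Bool) :
    Finset.univ.inf f = true ↔ ∀ j, f j = true := by
  have : (⊤ : Bool) = true := rfl
  rw [← this, Finset.inf_eq_top_iff]
  simp [this]

lemma bOuter_true_iff {n : ℕ} (v : Fin n → Fin 2 → Bool) (i : Fin n → Fin 2) :
    bOuter n v i = true ↔ ∀ j, v j (i j) = true := by
  unfold bOuter
  exact inf_true_iff _

lemma eta3 (i : Fin 3 → Fin 2) : i = ![i 0, i 1, i 2] := by
  funext j
  fin_cases j <;> rfl

/-- Upper bound: every array has rank at most 4. -/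
lemma upper (X : (Fin 3 → Fin 2) → Bool) : bHasRankLE 3 4 X := by
  classical
  set pq : Fin 4 → Fin 2 × Fin 2 := ![(0,0),(0,1),(1,0),(1,1)] with hpq
  refine ⟨fun r j k =>
      if j = 0 then decide (k = (pq r).1)
      else if j = 1 then decide (k = (pq r).2)
      else X ![(pq r).1, (pq r).2, k], ?_⟩
  funext i
  have hsurj : ∀ a b : Fin 2, ∃ r : Fin 4, pq r = (a, b) := by decide
  rcases hsurj (i 0) (i 1) with ⟨r0, hr0⟩
  apply Bool.eq_iff_iff.mpr
  rw [sup_true_iff]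
  constructor
  · intro hX
    refine ⟨r0, (bOuter_true_iff _ _).2 ?_⟩
    intro j
    fin_cases j <;> simp [hr0]
    rw [← eta3 i]; exact hX
  · rintro ⟨r, hr⟩
    rw [bOuter_true_iff] at hr
    have h0 := hr 0
    have h1 := hr 1
    have h2 := hr 2
    simp at h0 h1 h2
    rw [← h0, ← h1] at h2
    rw [← eta3 i] at h2
    exact h2

lemma mono {m R : ℕ} (X : (Fin 3 → Fin 2) → Bool) (h : m ≤ R)
    (hm : bHasRankLE 3 m X) : bHasRankLE 3 R X := by
  obtain ⟨v, hv⟩ := hm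
  refine ⟨fun r => if hr : (r : ℕ) < m then v ⟨r, hr⟩ else fun _ _ => false, ?_⟩
  funext i
  rw [hv]
  apply Bool.eq_iff_iff.mpr
  rw [sup_true_iff, sup_true_iff]
  constructor
  · rintro ⟨r, hr⟩
    refine ⟨⟨r, lt_of_lt_of_le r.isLt h⟩, ?_⟩
    simpa [r.isLt] using hr
  · rintro ⟨r, hr⟩
    by_cases hrm : (r : ℕ) < m
    · exact ⟨⟨r, hrm⟩, by simpa [hrm] using hr⟩
    · exfalso
      rw [bOuter_true_iff] at hr
      have := hr 0
      simp [hrm] at this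

/-- The parity tensor. -/
def Xpar : (Fin 3 → Fin 2) → Bool :=
  bflat3 ![false, true, true, false, true, false, false, true]

def P : Fin 4 → (Fin 3 → Fin 2) := ![![0,0,1], ![0,1,0], ![1,0,0], ![1,1,1]]

lemma mixlem : ∀ s t : Fin 4, s ≠ t → ∃ m : Fin 3 → Fin 2, Xpar m = false ∧
    ∀ j, m j = P s j ∨ m j = P t j := by decide

lemma lower : ¬ bHasRankLE 3 3 Xpar := by
  rintro ⟨v, hv⟩
  have hXP : ∀ s : Fin 4, Xpar (P s) = true := by decide
  have hcover : ∀ s : Fin 4, ∃ r : Fin 3, bOuter 3 (v r) (P s) = true := by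
    intro s
    have := hXP s
    rw [hv] at this
    exact (sup_true_iff _).1 this
  choose g hg using hcover
  have hcard : Fintype.card (Fin 3) < Fintype.card (Fin 4) := by decide
  obtain ⟨s, t, hst, hgst⟩ := Fintype.exists_ne_map_eq_of_card_lt g hcard
  obtain ⟨m, hm, hmj⟩ := mixlem s t hst
  have hs := (bOuter_true_iff _ _).1 (hg s)
  have ht := (bOuter_true_iff _ _).1 (hg t)
  rw [hgst] at hs
  have hbm : bOuter 3 (v (g t)) m = true := by
    rw [bOuter_true_iff]
    intro j
    rcases hmj j with h | h <;> rw [h]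
    · exact hs j
    · exact ht j
  have : Xpar m = true := by
    rw [hv]
    exact (sup_true_iff _).2 ⟨g t, hbm⟩
  rw [hm] at this
  exact absurd this (by decide)

theorem max_boolean_rank_222 :
    (∀ X : (Fin 3 → Fin 2) → Bool, boolRank 3 X ≤ 4) ∧
    boolRank 3 (bflat3 ![false, true, true, false, true, false, false, true]) = 4 := by
  constructor
  · intro X
    exact Nat.sInf_le (upper X)
  · apply le_antisymm
    · exact Nat.sInf_le (upper _)
    · apply le_csInf
      · exact ⟨4, upper _⟩
      · intro R hR
        by_contra hlt
        push_neg at hlt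
        exact lower (mono _ (by omega) hR)
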